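/- Let U ⊆ ℝ⁴ be open with a smooth Lorentzian metric g of signature (+,−,−,−), and let F be a source-free Maxwell field on (U,g). Then the two nonvanishing traces of E_{abcd} (the basic superenergy tensor of ∇F) are related by (1/2) g^{ce}E_{ceab} = g^{ce}E_{c a b e} = H_{ab}, where H_{ab} = g^{cd}H_{cdab} is the trace of the Chevreton tensor. -/

import Mathlib

noncomputable section

open scoped BigOperators

/-- Points of the spacetime: ℝ⁴ in coordinates. -/
abbrev Pt := Fin 4 → ℝ

/-- A point-dependent rank-2 array of components (metric, 2-form, ...). -/
abbrev Met := Pt → Fin 4 → Fin 4 → ℝ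

/-- Partial derivative ∂ₐ f at x (directional derivative along the a-th coordinate). -/
def pd (f : Pt → ℝ) (a : Fin 4) (x : Pt) : ℝ := fderiv ℝ f x (Pi.single a 1)

/-- The Minkowski matrix diag(1,-1,-1,-1). -/
def mink : Matrix (Fin 4) (Fin 4) ℝ :=
  fun a b => if a = b then (if a = 0 then 1 else -1) else 0

/-- g(x) is a symmetric matrix of Lorentzian signature (+,-,-,-) at each point of U. -/
def LorentzSignatureOn (g : Met) (U : Set Pt) : Prop :=
  ∀ x ∈ U, ∃ P : Matrix (Fin 4) (Fin 4) ℝ, IsUnit P.det ∧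
    Matrix.of (g x) = P.transpose * mink * P

/-- ginv is the pointwise inverse matrix of g on U (encodes nondegeneracy of g). -/
def InverseOn (g ginv : Met) (U : Set Pt) : Prop :=
  ∀ x ∈ U, ∀ a b : Fin 4, (∑ k, g x a k * ginv x k b) = if a = b then (1:ℝ) else 0

/-- All components are smooth (C^∞) on U. -/
def SmoothCompOn (g : Met) (U : Set Pt) : Prop :=
  ∀ a b : Fin 4, ContDiffOn ℝ (⊤ : ℕ∞) (fun x => g x a b) U

/-- Pointwise symmetry on U. -/
def SymmOn (g : Met) (U : Set Pt) : Prop := ∀ x ∈ U, ∀ a b : Fin 4, g x a b = g x b a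

/-- Pointwise antisymmetry on U. -/
def AntisymmOn (F : Met) (U : Set Pt) : Prop := ∀ x ∈ U, ∀ a b : Fin 4, F x a b = - F x b a

/-- Christoffel symbols Γ^a_{bc} = (1/2) g^{ad} (∂_b g_{dc} + ∂_c g_{bd} - ∂_d g_{bc}). -/
def Christoffel (g ginv : Met) (x : Pt) (a b c : Fin 4) : ℝ :=
  (1/2) * ∑ d, ginv x a d *
    (pd (fun y => g y d c) b x + pd (fun y => g y b d) c x - pd (fun y => g y b c) d x)

/-- Covariant derivative ∇_a F_{bc} = ∂_a F_{bc} - Γ^d_{ab} F_{dc} - Γ^d_{ac} F_{bd}. -/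
def covdF (g ginv F : Met) (x : Pt) (a b c : Fin 4) : ℝ :=
  pd (fun y => F y b c) a x - (∑ d, Christoffel g ginv x d a b * F x d c)
    - (∑ d, Christoffel g ginv x d a c * F x b d)

/-- F is a source-free Maxwell field on U: smooth, antisymmetric, with
    g^{ab}∇_a F_{bc} = 0 and ∂_{[a}F_{bc]} = 0. -/
def MaxwellOn (g ginv F : Met) (U : Set Pt) : Prop :=
  SmoothCompOn F U ∧ AntisymmOn F U ∧
  (∀ x ∈ U, ∀ c : Fin 4, (∑ a, ∑ b, ginv x a b * covdF g ginv F x a b c) = 0) ∧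
  (∀ x ∈ U, ∀ a b c : Fin 4,
    pd (fun y => F y b c) a x + pd (fun y => F y c a) b x + pd (fun y => F y a b) c x = 0)

/-- Basic superenergy tensor T_{abcd}{A} of a double (1,2)-form A, with metric
    components gm and inverse metric components gi:
    T_{abcd} = -A_{acf}A_{bd}{}^f - A_{adf}A_{bc}{}^f + g_{ab}A_{ecf}A^e{}_d{}^f
               + (1/2) g_{cd}A_{aef}A_b{}^{ef} - (1/4) g_{ab}g_{cd}A_{efg}A^{efg}. -/
def SE (gm gi : Fin 4 → Fin 4 → ℝ) (A : Fin 4 → Fin 4 → Fin 4 → ℝ) (a b c d : Fin 4) : ℝ :=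
  - (∑ f, ∑ k, A a c f * gi f k * A b d k)
  - (∑ f, ∑ k, A a d f * gi f k * A b c k)
  + gm a b * (∑ e, ∑ i, ∑ f, ∑ k, gi e i * gi f k * A e c f * A i d k)
  + (1/2) * gm c d * (∑ e, ∑ i, ∑ f, ∑ k, gi e i * gi f k * A a e f * A b i k)
  - (1/4) * gm a b * gm c d *
      (∑ e, ∑ i, ∑ f, ∑ k, ∑ p, ∑ q, gi e i * gi f k * gi p q * A e f p * A i k q)

/-- E_{abcd}: the basic superenergy tensor of A_{abc} = ∇_a F_{bc}. -/
def Etens (g ginv F : Met) (x : Pt) (a b c d : Fin 4) : ℝ :=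
  SE (g x) (ginv x) (covdF g ginv F x) a b c d

/-- The Chevreton tensor H_{abcd} = (1/2)(E_{abcd} + E_{cdab}). -/
def Chev (g ginv F : Met) (x : Pt) (a b c d : Fin 4) : ℝ :=
  (1/2) * (Etens g ginv F x a b c d + Etens g ginv F x c d a b)

/-- The trace H_{ab} = g^{cd} H_{cdab} of the Chevreton tensor. -/
def ChevTr (g ginv F : Met) (x : Pt) (a b : Fin 4) : ℝ :=
  ∑ c, ∑ d, ginv x c d * Chev g ginv F x c d a b


/-! ### Auxiliary algebraic lemmas -/

abbrev I4 := Fin 4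

def Dq (gi : I4 → I4 → ℝ) (A : I4 → I4 → I4 → ℝ) (a b : I4) : ℝ :=
  ∑ p, ∑ r, ∑ f, ∑ k, gi p r * gi f k * A a p f * A b r k
def Sq (gi : I4 → I4 → ℝ) (A : I4 → I4 → I4 → ℝ) (a b : I4) : ℝ :=
  ∑ p, ∑ r, ∑ f, ∑ k, gi p r * gi f k * A p a f * A r b k
def Xq (gi : I4 → I4 → ℝ) (A : I4 → I4 → I4 → ℝ) (a b : I4) : ℝ :=
  ∑ c, ∑ e, ∑ f, ∑ k, gi c e * gi f k * A c b f * A a e k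
def Qq (gi : I4 → I4 → ℝ) (A : I4 → I4 → I4 → ℝ) : ℝ :=
  ∑ e, ∑ i, ∑ f, ∑ k, ∑ p, ∑ q, gi e i * gi f k * gi p q * A e f p * A i k q

-- utilities from t1 (assume they exist; paste)
lemma sum2_mul_left (K : ℝ) (f : I4 → I4 → ℝ) :
    (∑ c, ∑ e, K * f c e) = K * ∑ c, ∑ e, f c e := by
  simp [Finset.mul_sum]

lemma sum2_mul_right (K : ℝ) (f : I4 → I4 → ℝ) :
    (∑ c, ∑ e, f c e * K) = (∑ c, ∑ e, f c e) * K := by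
  simp [Finset.sum_mul]

lemma delta_sum (a : I4) (v : I4 → ℝ) :
    (∑ e, (if a = e then (1:ℝ) else 0) * v e) = v a := by
  simp

lemma contract1 (gm gi : I4 → I4 → ℝ)
    (hgm : ∀ a b, gm a b = gm b a)
    (h2 : ∀ a b, (∑ k, gm a k * gi k b) = if a = b then (1:ℝ) else 0)
    (a : I4) (V : I4 → ℝ) :
    (∑ c, ∑ e, gi c e * gm c a * V e) = V a := by
  rw [Finset.sum_comm]
  calc (∑ e, ∑ c, gi c e * gm c a * V e)
      = ∑ e, (∑ c, gm a c * gi c e) * V e := by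
        refine Finset.sum_congr rfl fun e _ => ?_
        rw [Finset.sum_mul]
        exact Finset.sum_congr rfl fun c _ => by rw [hgm a c]; ring
    _ = ∑ e, (if a = e then (1:ℝ) else 0) * V e := by
        exact Finset.sum_congr rfl fun e _ => by rw [h2 a e]
    _ = V a := delta_sum a V

lemma contract2 (gm gi : I4 → I4 → ℝ)
    (hgm : ∀ a b, gm a b = gm b a)
    (hgi : ∀ a b, gi a b = gi b a)
    (h2 : ∀ a b, (∑ k, gm a k * gi k b) = if a = b then (1:ℝ) else 0)
    (b : I4) (V : I4 → ℝ) :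
    (∑ c, ∑ e, gi c e * gm b e * V c) = V b := by
  rw [Finset.sum_comm]
  calc (∑ e, ∑ c, gi c e * gm b e * V c)
      = ∑ e, ∑ c, gi e c * gm e b * V c := by
        refine Finset.sum_congr rfl fun e _ => Finset.sum_congr rfl fun c _ => ?_
        rw [hgi e c, hgm e b]
    _ = V b := contract1 gm gi hgm h2 b V

lemma contract3 (gm gi : I4 → I4 → ℝ)
    (hgm : ∀ a b, gm a b = gm b a)
    (h2 : ∀ a b, (∑ k, gm a k * gi k b) = if a = b then (1:ℝ) else 0)
    (a b : I4) :
    (∑ c, ∑ e, gi c e * gm c a * gm b e) = gm a b := by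
  rw [contract1 gm gi hgm h2 a (fun e => gm b e), hgm b a]

lemma trace4 (gm gi : I4 → I4 → ℝ)
    (hgm : ∀ a b, gm a b = gm b a)
    (h3 : ∀ a b, (∑ k, gi a k * gm k b) = if a = b then (1:ℝ) else 0) :
    (∑ c, ∑ e, gi c e * gm c e) = 4 := by
  have h : ∀ c : I4, (∑ e, gi c e * gm c e) = 1 := by
    intro c
    have hc := h3 c c
    simp only [if_pos] at hc
    rw [← hc]
    exact Finset.sum_congr rfl fun e _ => by rw [hgm c e]
  simp [h]

abbrev T4 := I4 × I4 × I4 × I4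
abbrev T6 := I4 × I4 × I4 × I4 × I4 × I4

lemma nest4 (F : I4 → I4 → I4 → I4 → ℝ) :
    (∑ a, ∑ b, ∑ c, ∑ d, F a b c d) = ∑ x : T4, F x.1 x.2.1 x.2.2.1 x.2.2.2 := by
  symm; simp [Fintype.sum_prod_type]

lemma nest6 (F : I4 → I4 → I4 → I4 → I4 → I4 → ℝ) :
    (∑ a, ∑ b, ∑ c, ∑ d, ∑ e, ∑ f, F a b c d e f)
      = ∑ x : T6, F x.1 x.2.1 x.2.2.1 x.2.2.2.1 x.2.2.2.2.1 x.2.2.2.2.2 := by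
  symm; simp [Fintype.sum_prod_type]

lemma perm4 (F G : I4 → I4 → I4 → I4 → ℝ) (σ : T4 → T4)
    (hσ : ∀ x, σ (σ x) = x)
    (h : ∀ a b c d, F a b c d = (fun x : T4 => G x.1 x.2.1 x.2.2.1 x.2.2.2) (σ (a,b,c,d))) :
    (∑ a, ∑ b, ∑ c, ∑ d, F a b c d) = ∑ a, ∑ b, ∑ c, ∑ d, G a b c d := by
  rw [nest4, nest4]
  exact Fintype.sum_bijective σ (Function.Involutive.bijective hσ) _ _
    (fun x => h x.1 x.2.1 x.2.2.1 x.2.2.2)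

lemma perm6 (F G : I4 → I4 → I4 → I4 → I4 → I4 → ℝ) (σ : T6 → T6)
    (hσ : ∀ x, σ (σ x) = x)
    (h : ∀ a b c d e f, F a b c d e f
        = (fun x : T6 => G x.1 x.2.1 x.2.2.1 x.2.2.2.1 x.2.2.2.2.1 x.2.2.2.2.2) (σ (a,b,c,d,e,f))) :
    (∑ a, ∑ b, ∑ c, ∑ d, ∑ e, ∑ f, F a b c d e f)
      = ∑ a, ∑ b, ∑ c, ∑ d, ∑ e, ∑ f, G a b c d e f := by
  rw [nest6, nest6]
  exact Fintype.sum_bijective σ (Function.Involutive.bijective hσ) _ _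
    (fun x => h x.1 x.2.1 x.2.2.1 x.2.2.2.1 x.2.2.2.2.1 x.2.2.2.2.2)

section main
variable (gm gi : I4 → I4 → ℝ) (A : I4 → I4 → I4 → ℝ)

-- S is symmetric
lemma Sq_symm (hgi : ∀ a b, gi a b = gi b a) (a b : I4) : Sq gi A a b = Sq gi A b a := by
  unfold Sq
  refine perm4 _ _ (fun x => (x.2.1, x.1, x.2.2.2, x.2.2.1)) (fun x => rfl) ?_
  intro p r f k
  show gi p r * gi f k * A p a f * A r b k = gi r p * gi k f * A r b k * A p a f
  rw [hgi r p, hgi k f]; ring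

lemma Xq_eq (hgi : ∀ a b, gi a b = gi b a)
    (h4 : ∀ a b c, A a b c = - A a c b)
    (h5 : ∀ a b c, A a b c + A b c a + A c a b = 0) (a b : I4) :
    Xq gi A a b = (1/2) * Dq gi A b a := by
  have hsplit : Xq gi A a b =
      (∑ c, ∑ e, ∑ f, ∑ k, (-(gi c e * gi f k * A b f c * A a e k)
        - gi c e * gi f k * A f c b * A a e k)) := by
    unfold Xq
    refine Finset.sum_congr rfl fun c _ => Finset.sum_congr rfl fun e _ =>
      Finset.sum_congr rfl fun f _ => Finset.sum_congr rfl fun k _ => ?_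
    linear_combination (gi c e * gi f k * A a e k) * (h5 c b f)
  have hP1 : (∑ c, ∑ e, ∑ f, ∑ k, gi c e * gi f k * A b f c * A a e k)
      = - Dq gi A b a := by
    have : (∑ c, ∑ e, ∑ f, ∑ k, gi c e * gi f k * A b f c * A a e k)
        = ∑ p, ∑ r, ∑ f, ∑ k, (-(gi p r * gi f k * A b p f * A a r k)) := by
      refine perm4 _ _ (fun x => (x.2.2.1, x.2.2.2, x.1, x.2.1)) (fun x => rfl) ?_
      intro c e f k
      show gi c e * gi f k * A b f c * A a e k = -(gi f k * gi c e * A b f c * A a k e)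
      rw [h4 a e k]; ring
    rw [this]
    simp [Dq, Finset.sum_neg_distrib]
  have hP2 : (∑ c, ∑ e, ∑ f, ∑ k, gi c e * gi f k * A f c b * A a e k)
      = Xq gi A a b := by
    unfold Xq
    refine perm4 _ _ (fun x => (x.2.2.1, x.2.2.2, x.1, x.2.1)) (fun x => rfl) ?_
    intro c e f k
    show gi c e * gi f k * A f c b * A a e k = gi f k * gi c e * A f b c * A a k e
    rw [h4 f c b, h4 a e k]; ring
  have hsum : Xq gi A a b
      = -(∑ c, ∑ e, ∑ f, ∑ k, gi c e * gi f k * A b f c * A a e k)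
        - (∑ c, ∑ e, ∑ f, ∑ k, gi c e * gi f k * A f c b * A a e k) := by
    rw [hsplit]
    simp [Finset.sum_sub_distrib, Finset.sum_neg_distrib]
  rw [hP1, hP2] at hsum
  linarith

lemma traceLast
    (hgm : ∀ a b, gm a b = gm b a) (hgi : ∀ a b, gi a b = gi b a)
    (h3 : ∀ a b, (∑ k, gi a k * gm k b) = if a = b then (1:ℝ) else 0)
    (a b : I4) :
    (∑ c, ∑ e, gi c e * SE gm gi A a b c e) = 0 := by
  have e1 : (∑ c, ∑ e, gi c e * (∑ f, ∑ k, A a c f * gi f k * A b e k))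
      = Dq gi A a b := by
    unfold Dq
    simp only [Finset.mul_sum]
    exact Finset.sum_congr rfl fun c _ => Finset.sum_congr rfl fun e _ =>
      Finset.sum_congr rfl fun f _ => Finset.sum_congr rfl fun k _ => by ring
  have e2 : (∑ c, ∑ e, gi c e * (∑ f, ∑ k, A a e f * gi f k * A b c k))
      = Dq gi A a b := by
    unfold Dq
    simp only [Finset.mul_sum]
    refine perm4 _ _ (fun x => (x.2.1, x.1, x.2.2.1, x.2.2.2)) (fun x => rfl) ?_
    intro c e f k
    show gi c e * (A a e f * gi f k * A b c k) = gi e c * gi f k * A a e f * A b c k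
    rw [hgi e c]; ring
  have e3 : (∑ c, ∑ e, gi c e *
        (∑ p, ∑ r, ∑ f, ∑ k, gi p r * gi f k * A p c f * A r e k)) = Qq gi A := by
    unfold Qq
    simp only [Finset.mul_sum]
    refine perm6 _ _
      (fun x => (x.2.2.1, x.2.2.2.1, x.1, x.2.1, x.2.2.2.2.1, x.2.2.2.2.2))
      (fun x => rfl) ?_
    intro c e p r f k
    show gi c e * (gi p r * gi f k * A p c f * A r e k)
        = gi p r * gi c e * gi f k * A p c f * A r e k
    ring
  calc (∑ c, ∑ e, gi c e * SE gm gi A a b c e)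
      = ∑ c, ∑ e,
        ((gi c e * gm c e) * ((1/2) * Dq gi A a b)
          + gm a b * (gi c e * (∑ p, ∑ r, ∑ f, ∑ k, gi p r * gi f k * A p c f * A r e k))
          - gi c e * (∑ f, ∑ k, A a c f * gi f k * A b e k)
          - gi c e * (∑ f, ∑ k, A a e f * gi f k * A b c k)
          - (gi c e * gm c e) * ((1/4) * gm a b * Qq gi A)) := by
        refine Finset.sum_congr rfl fun c _ => Finset.sum_congr rfl fun e _ => ?_
        simp only [SE, Qq, Dq]; ring
    _ = (∑ c, ∑ e, (gi c e * gm c e) * ((1/2) * Dq gi A a b))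
        + (∑ c, ∑ e, gm a b * (gi c e * (∑ p, ∑ r, ∑ f, ∑ k, gi p r * gi f k * A p c f * A r e k)))
        - (∑ c, ∑ e, gi c e * (∑ f, ∑ k, A a c f * gi f k * A b e k))
        - (∑ c, ∑ e, gi c e * (∑ f, ∑ k, A a e f * gi f k * A b c k))
        - (∑ c, ∑ e, (gi c e * gm c e) * ((1/4) * gm a b * Qq gi A)) := by
        simp only [Finset.sum_add_distrib, Finset.sum_sub_distrib]
    _ = 0 := by
        rw [sum2_mul_right, sum2_mul_right, sum2_mul_left, trace4 gm gi hgm h3, e1, e2, e3]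
        ring

lemma traceFirst
    (hgm : ∀ a b, gm a b = gm b a)
    (h3 : ∀ a b, (∑ k, gi a k * gm k b) = if a = b then (1:ℝ) else 0)
    (a b : I4) :
    (∑ c, ∑ e, gi c e * SE gm gi A c e a b)
      = 3 * Sq gi A a b - Sq gi A b a - (1/2) * gm a b * Qq gi A := by
  have eB : (∑ c, ∑ e, gi c e *
        (∑ p, ∑ r, ∑ f, ∑ k, gi p r * gi f k * A c p f * A e r k)) = Qq gi A := by
    unfold Qq
    simp only [Finset.mul_sum]
    exact Finset.sum_congr rfl fun c _ => Finset.sum_congr rfl fun e _ =>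
      Finset.sum_congr rfl fun p _ => Finset.sum_congr rfl fun r _ =>
      Finset.sum_congr rfl fun f _ => Finset.sum_congr rfl fun k _ => by ring
  have eC : (∑ c, ∑ e, gi c e * (∑ f, ∑ k, A c a f * gi f k * A e b k))
      = Sq gi A a b := by
    unfold Sq
    simp only [Finset.mul_sum]
    exact Finset.sum_congr rfl fun c _ => Finset.sum_congr rfl fun e _ =>
      Finset.sum_congr rfl fun f _ => Finset.sum_congr rfl fun k _ => by ring
  have eD : (∑ c, ∑ e, gi c e * (∑ f, ∑ k, A c b f * gi f k * A e a k))
      = Sq gi A b a := by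
    unfold Sq
    simp only [Finset.mul_sum]
    exact Finset.sum_congr rfl fun c _ => Finset.sum_congr rfl fun e _ =>
      Finset.sum_congr rfl fun f _ => Finset.sum_congr rfl fun k _ => by ring
  calc (∑ c, ∑ e, gi c e * SE gm gi A c e a b)
      = ∑ c, ∑ e,
        ((gi c e * gm c e) * Sq gi A a b
          + ((1/2) * gm a b) * (gi c e * (∑ p, ∑ r, ∑ f, ∑ k, gi p r * gi f k * A c p f * A e r k))
          - gi c e * (∑ f, ∑ k, A c a f * gi f k * A e b k)
          - gi c e * (∑ f, ∑ k, A c b f * gi f k * A e a k)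
          - (gi c e * gm c e) * ((1/4) * gm a b * Qq gi A)) := by
        refine Finset.sum_congr rfl fun c _ => Finset.sum_congr rfl fun e _ => ?_
        simp only [SE, Qq, Sq]; ring
    _ = (∑ c, ∑ e, (gi c e * gm c e) * Sq gi A a b)
        + (∑ c, ∑ e, ((1/2) * gm a b) * (gi c e * (∑ p, ∑ r, ∑ f, ∑ k, gi p r * gi f k * A c p f * A e r k)))
        - (∑ c, ∑ e, gi c e * (∑ f, ∑ k, A c a f * gi f k * A e b k))
        - (∑ c, ∑ e, gi c e * (∑ f, ∑ k, A c b f * gi f k * A e a k))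
        - (∑ c, ∑ e, (gi c e * gm c e) * ((1/4) * gm a b * Qq gi A)) := by
        simp only [Finset.sum_add_distrib, Finset.sum_sub_distrib]
    _ = 3 * Sq gi A a b - Sq gi A b a - (1/2) * gm a b * Qq gi A := by
        rw [sum2_mul_right, sum2_mul_right, sum2_mul_left, trace4 gm gi hgm h3, eB, eC, eD]
        ring

lemma traceMixed
    (hgm : ∀ a b, gm a b = gm b a) (hgi : ∀ a b, gi a b = gi b a)
    (h2 : ∀ a b, (∑ k, gm a k * gi k b) = if a = b then (1:ℝ) else 0)
    (h6 : ∀ f, (∑ c, ∑ e, gi c e * A c e f) = 0)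
    (a b : I4) :
    (∑ c, ∑ e, gi c e * SE gm gi A c a b e)
      = Sq gi A b a + (1/2) * Dq gi A b a - Xq gi A a b - (1/4) * gm a b * Qq gi A := by
  have eA : (∑ c, ∑ e, gi c e * gm c a *
        (∑ p, ∑ r, ∑ f, ∑ k, gi p r * gi f k * A p b f * A r e k)) = Sq gi A b a := by
    exact contract1 gm gi hgm h2 a
      (fun e => ∑ p, ∑ r, ∑ f, ∑ k, gi p r * gi f k * A p b f * A r e k)
  have eB : (∑ c, ∑ e, gi c e * gm b e *
        (∑ p, ∑ r, ∑ f, ∑ k, gi p r * gi f k * A c p f * A a r k)) = Dq gi A b a := by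
    exact contract2 gm gi hgm hgi h2 b
      (fun c => ∑ p, ∑ r, ∑ f, ∑ k, gi p r * gi f k * A c p f * A a r k)
  have eC : (∑ c, ∑ e, gi c e * (∑ f, ∑ k, A c b f * gi f k * A a e k))
      = Xq gi A a b := by
    unfold Xq
    simp only [Finset.mul_sum]
    exact Finset.sum_congr rfl fun c _ => Finset.sum_congr rfl fun e _ =>
      Finset.sum_congr rfl fun f _ => Finset.sum_congr rfl fun k _ => by ring
  have eD : (∑ c, ∑ e, gi c e * (∑ f, ∑ k, A c e f * gi f k * A a b k)) = 0 := by
    simp only [Finset.mul_sum]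
    have hperm : (∑ c, ∑ e, ∑ f, ∑ k, gi c e * (A c e f * gi f k * A a b k))
        = ∑ f, ∑ k, ∑ c, ∑ e, (gi c e * A c e f) * (gi f k * A a b k) := by
      refine perm4 _ _ (fun x => (x.2.2.1, x.2.2.2, x.1, x.2.1)) (fun x => rfl) ?_
      intro c e f k
      show gi c e * (A c e f * gi f k * A a b k) = (gi c e * A c e f) * (gi f k * A a b k)
      ring
    rw [hperm]
    refine Finset.sum_eq_zero fun f _ => Finset.sum_eq_zero fun k _ => ?_
    rw [sum2_mul_right, h6 f, zero_mul]
  calc (∑ c, ∑ e, gi c e * SE gm gi A c a b e)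
      = ∑ c, ∑ e,
        (gi c e * gm c a * (∑ p, ∑ r, ∑ f, ∑ k, gi p r * gi f k * A p b f * A r e k)
          + (1/2) * (gi c e * gm b e * (∑ p, ∑ r, ∑ f, ∑ k, gi p r * gi f k * A c p f * A a r k))
          - gi c e * (∑ f, ∑ k, A c b f * gi f k * A a e k)
          - gi c e * (∑ f, ∑ k, A c e f * gi f k * A a b k)
          - ((1/4) * Qq gi A) * (gi c e * gm c a * gm b e)) := by
        refine Finset.sum_congr rfl fun c _ => Finset.sum_congr rfl fun e _ => ?_
        simp only [SE, Qq]; ring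
    _ = (∑ c, ∑ e, gi c e * gm c a * (∑ p, ∑ r, ∑ f, ∑ k, gi p r * gi f k * A p b f * A r e k))
        + (∑ c, ∑ e, (1/2) * (gi c e * gm b e * (∑ p, ∑ r, ∑ f, ∑ k, gi p r * gi f k * A c p f * A a r k)))
        - (∑ c, ∑ e, gi c e * (∑ f, ∑ k, A c b f * gi f k * A a e k))
        - (∑ c, ∑ e, gi c e * (∑ f, ∑ k, A c e f * gi f k * A a b k))
        - (∑ c, ∑ e, ((1/4) * Qq gi A) * (gi c e * gm c a * gm b e)) := by
        simp only [Finset.sum_add_distrib, Finset.sum_sub_distrib]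
    _ = Sq gi A b a + (1/2) * Dq gi A b a - Xq gi A a b - (1/4) * gm a b * Qq gi A := by
        rw [sum2_mul_left, sum2_mul_left, eA, eB, eC, eD, contract3 gm gi hgm h2 a b]
        ring

end main

/-! ### Auxiliary analytic lemmas -/

lemma pd_congr {U : Set Pt} (hU : IsOpen U) {x : Pt} (hx : x ∈ U) {f g : Pt → ℝ}
    (h : ∀ y ∈ U, f y = g y) (a : Fin 4) : pd f a x = pd g a x := by
  unfold pd
  rw [Filter.EventuallyEq.fderiv_eq (Filter.eventuallyEq_of_mem (hU.mem_nhds hx) h)]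

lemma pd_neg (f : Pt → ℝ) (a : Fin 4) (x : Pt) :
    pd (fun y => - f y) a x = - pd f a x := by
  unfold pd
  rw [fderiv_fun_neg]
  simp

lemma christoffel_symm {U : Set Pt} (hU : IsOpen U) (g ginv : Met)
    (hgsym : SymmOn g U) {x : Pt} (hx : x ∈ U) (d a b : Fin 4) :
    Christoffel g ginv x d a b = Christoffel g ginv x d b a := by
  unfold Christoffel
  congr 1
  refine Finset.sum_congr rfl fun e _ => ?_
  have h1 : pd (fun y => g y e b) a x = pd (fun y => g y b e) a x :=
    pd_congr hU hx (fun y hy => hgsym y hy e b) a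
  have h2 : pd (fun y => g y a e) b x = pd (fun y => g y e a) b x :=
    pd_congr hU hx (fun y hy => hgsym y hy a e) b
  have h3 : pd (fun y => g y a b) e x = pd (fun y => g y b a) e x :=
    pd_congr hU hx (fun y hy => hgsym y hy a b) e
  rw [h1, h2, h3]
  ring

lemma covdF_anti {U : Set Pt} (hU : IsOpen U) (g ginv F : Met)
    (hFa : AntisymmOn F U) {x : Pt} (hx : x ∈ U) (a b c : Fin 4) :
    covdF g ginv F x a b c = - covdF g ginv F x a c b := by
  unfold covdF
  have hF := hFa x hx
  have h1 : pd (fun y => F y b c) a x = pd (fun y => - F y c b) a x :=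
    pd_congr hU hx (fun y hy => hFa y hy b c) a
  rw [h1, pd_neg]
  have h2 : (∑ d, Christoffel g ginv x d a b * F x d c)
      = -(∑ d, Christoffel g ginv x d a b * F x c d) := by
    rw [← Finset.sum_neg_distrib]
    exact Finset.sum_congr rfl fun d _ => by rw [hF d c]; ring
  have h3 : (∑ d, Christoffel g ginv x d a c * F x b d)
      = -(∑ d, Christoffel g ginv x d a c * F x d b) := by
    rw [← Finset.sum_neg_distrib]
    exact Finset.sum_congr rfl fun d _ => by rw [hF b d]; ring
  rw [h2, h3]
  ring

lemma covdF_cyclic {U : Set Pt} (hU : IsOpen U) (g ginv F : Met)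
    (hgsym : SymmOn g U) (hFa : AntisymmOn F U)
    (hclosed : ∀ x ∈ U, ∀ a b c : Fin 4,
      pd (fun y => F y b c) a x + pd (fun y => F y c a) b x + pd (fun y => F y a b) c x = 0)
    {x : Pt} (hx : x ∈ U) (a b c : Fin 4) :
    covdF g ginv F x a b c + covdF g ginv F x b c a + covdF g ginv F x c a b = 0 := by
  unfold covdF
  have hpd := hclosed x hx a b c
  have hF := hFa x hx
  have hΓ := fun d p q => christoffel_symm hU g ginv hgsym hx d p q
  have s1 : (∑ d, Christoffel g ginv x d a b * F x d c)
      + (∑ d, Christoffel g ginv x d b a * F x c d) = 0 := by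
    rw [← Finset.sum_add_distrib]
    refine Finset.sum_eq_zero fun d _ => ?_
    rw [hΓ d b a, hF c d]; ring
  have s2 : (∑ d, Christoffel g ginv x d a c * F x b d)
      + (∑ d, Christoffel g ginv x d c a * F x d b) = 0 := by
    rw [← Finset.sum_add_distrib]
    refine Finset.sum_eq_zero fun d _ => ?_
    rw [hΓ d c a, hF b d]; ring
  have s3 : (∑ d, Christoffel g ginv x d b c * F x d a)
      + (∑ d, Christoffel g ginv x d c b * F x a d) = 0 := by
    rw [← Finset.sum_add_distrib]
    refine Finset.sum_eq_zero fun d _ => ?_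
    rw [hΓ d c b, hF a d]; ring
  linarith

open Matrix in
lemma ginv_symm_and_left {U : Set Pt} (g ginv : Met) (hgsym : SymmOn g U)
    (hinv : InverseOn g ginv U) {x : Pt} (hx : x ∈ U) :
    (∀ a b : Fin 4, ginv x a b = ginv x b a) ∧
    (∀ a b : Fin 4, (∑ k, ginv x a k * g x k b) = if a = b then (1:ℝ) else 0) := by
  have hGmul : (Matrix.of (g x)) * (Matrix.of (ginv x)) = 1 := by
    ext a b
    rw [Matrix.mul_apply, Matrix.one_apply]
    exact hinv x hx a b
  have hGiG : (Matrix.of (ginv x)) * (Matrix.of (g x)) = 1 :=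
    mul_eq_one_comm.mp hGmul
  have h3 : ∀ a b : Fin 4, (∑ k, ginv x a k * g x k b) = if a = b then (1:ℝ) else 0 := by
    intro a b
    have h := Matrix.ext_iff.mpr hGiG a b
    rw [Matrix.mul_apply, Matrix.one_apply] at h
    exact h
  have hGt : (Matrix.of (g x))ᵀ = Matrix.of (g x) := by
    ext a b
    exact hgsym x hx b a
  have hT : (Matrix.of (ginv x))ᵀ * Matrix.of (g x) = 1 := by
    have h := congrArg Matrix.transpose hGmul
    rwa [Matrix.transpose_mul, hGt, Matrix.transpose_one] at h
  have hGit : (Matrix.of (ginv x))ᵀ = Matrix.of (ginv x) := by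
    calc (Matrix.of (ginv x))ᵀ
        = (Matrix.of (ginv x))ᵀ * (Matrix.of (g x) * Matrix.of (ginv x)) := by
          rw [hGmul, mul_one]
      _ = ((Matrix.of (ginv x))ᵀ * Matrix.of (g x)) * Matrix.of (ginv x) := by
          rw [mul_assoc]
      _ = Matrix.of (ginv x) := by rw [hT, one_mul]
  refine ⟨fun a b => ?_, h3⟩
  have h := Matrix.ext_iff.mpr hGit b a
  simpa [Matrix.transpose_apply] using h

/-- For a source-free Maxwell field, the two nonvanishing traces of E_{abcd}
(the basic superenergy tensor of ∇F) are related by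
(1/2) g^{ce} E_{ceab} = g^{ce} E_{cabe} = H_{ab}, where H_{ab} = g^{cd} H_{cdab}
is the trace of the Chevreton tensor. -/
theorem traces_of_E_related
    (U : Set Pt) (hU : IsOpen U) (g ginv F : Met)
    (hg : SmoothCompOn g U) (hgsym : SymmOn g U) (hsig : LorentzSignatureOn g U)
    (hginv : SmoothCompOn ginv U) (hinv : InverseOn g ginv U)
    (hF : MaxwellOn g ginv F U) :
    ∀ x ∈ U, ∀ a b : Fin 4,
      (1/2) * (∑ c, ∑ e, ginv x c e * Etens g ginv F x c e a b)
        = ChevTr g ginv F x a b ∧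
      (∑ c, ∑ e, ginv x c e * Etens g ginv F x c a b e)
        = ChevTr g ginv F x a b := by
  obtain ⟨hFsm, hFanti, hdiv, hclosed⟩ := hF
  intro x hx a b
  obtain ⟨hgi, h3⟩ := ginv_symm_and_left g ginv hgsym hinv hx
  have hgmx : ∀ p q : Fin 4, g x p q = g x q p := hgsym x hx
  have h2 := hinv x hx
  have h6 : ∀ f : Fin 4, (∑ c, ∑ e, ginv x c e * covdF g ginv F x c e f) = 0 :=
    hdiv x hx
  have h4 : ∀ p q r : Fin 4, covdF g ginv F x p q r = - covdF g ginv F x p r q :=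
    fun p q r => covdF_anti hU g ginv F hFanti hx p q r
  have h5 : ∀ p q r : Fin 4, covdF g ginv F x p q r + covdF g ginv F x q r p
      + covdF g ginv F x r p q = 0 :=
    fun p q r => covdF_cyclic hU g ginv F hgsym hFanti hclosed hx p q r
  have hTF := traceFirst (g x) (ginv x) (covdF g ginv F x) hgmx h3 a b
  have hTL1 := traceLast (g x) (ginv x) (covdF g ginv F x) hgmx hgi h3 a b
  have hTM := traceMixed (g x) (ginv x) (covdF g ginv F x) hgmx hgi h2 h6 a b
  have hX := Xq_eq (ginv x) (covdF g ginv F x) hgi h4 h5 a b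
  have hS := Sq_symm (ginv x) (covdF g ginv F x) hgi a b
  have hchev : ChevTr g ginv F x a b
      = (1/2) * ((∑ c, ∑ e, ginv x c e * SE (g x) (ginv x) (covdF g ginv F x) c e a b)
        + (∑ c, ∑ e, ginv x c e * SE (g x) (ginv x) (covdF g ginv F x) a b c e)) := by
    unfold ChevTr Chev Etens
    calc (∑ c, ∑ d, ginv x c d * ((1/2) * (SE (g x) (ginv x) (covdF g ginv F x) c d a b
            + SE (g x) (ginv x) (covdF g ginv F x) a b c d)))
        = ∑ c, ∑ d, ((1/2) * (ginv x c d * SE (g x) (ginv x) (covdF g ginv F x) c d a b)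
            + (1/2) * (ginv x c d * SE (g x) (ginv x) (covdF g ginv F x) a b c d)) :=
          Finset.sum_congr rfl fun c _ => Finset.sum_congr rfl fun d _ => by ring
      _ = (∑ c, ∑ d, (1/2) * (ginv x c d * SE (g x) (ginv x) (covdF g ginv F x) c d a b))
          + (∑ c, ∑ d, (1/2) * (ginv x c d * SE (g x) (ginv x) (covdF g ginv F x) a b c d)) := by
          simp only [Finset.sum_add_distrib]
      _ = (1/2) * ((∑ c, ∑ e, ginv x c e * SE (g x) (ginv x) (covdF g ginv F x) c e a b)
          + (∑ c, ∑ e, ginv x c e * SE (g x) (ginv x) (covdF g ginv F x) a b c e)) := by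
          rw [sum2_mul_left, sum2_mul_left]; ring
  constructor
  · simp only [Etens]
    rw [hchev, hTL1, hTF]
    ring
  · simp only [Etens]
    rw [hchev, hTL1, hTM, hTF, hX, hS]
    ring
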